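/- Let R > 0, let k_f : [0,R]×[0,R] → ℝ be continuous and symmetric (k_f(x,y) = k_f(y,x)), and let u : [0,R] → ℝ be continuous. Then ∫_0^R x · Q^R_f(u)(x) dx = 0, i.e. the truncated fragmentation operator (in which polymers of size greater than R cannot split) exactly conserves the total mass on [0,R]. -/

import Mathlib

open MeasureTheory

/-- The truncated fragmentation operator
`Q^R_f(u)(x) = (1/2) u(x) ∫_0^x k_f(y,x−y) dy − ∫_x^R k_f(x,y−x) u(y) dy`. -/
noncomputable def QfR (R : ℝ) (kf : ℝ → ℝ → ℝ) (u : ℝ → ℝ) (x : ℝ) : ℝ :=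
  (1 / 2) * u x * (∫ y in (0:ℝ)..x, kf y (x - y))
    - ∫ y in x..R, kf x (y - x) * u y

/-! Multiplying by `x` and using the symmetry `k(y, x - y) = k(x - y, y)` to move the weight to the
fragment, the loss term `(x/2) u(x) ∫_0^x k(y, x - y) dy` becomes `∫_0^x y k(y, x - y) u(x) dy`,
while the gain term is `∫_x^R x k(x, y - x) u(y) dy`. Both are iterated integrals of
`G(s, t) = s k(s, t - s) u(t)` over the triangle `0 ≤ s ≤ t ≤ R`, taken in the two orders, so they
cancel by Fubini. The hypotheses, which only concern `[0, R]`, are made global by composing `k` and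
`u` with the clamp `projIcc 0 R`; this changes nothing on `[0, R]` and makes `k` symmetric
everywhere. -/

open Set intervalIntegral

theorem intervalIntegral_integral_swap_triangle {a b : ℝ} (hab : a ≤ b) {g : ℝ × ℝ → ℝ}
    (hg : Continuous g) :
    ∫ x in a..b, ∫ y in x..b, g (x, y) = ∫ y in a..b, ∫ x in a..y, g (x, y) := by
  set T : Set (ℝ × ℝ) := {p | p.1 ≤ p.2}
  have hT : MeasurableSet T := (isClosed_le continuous_fst continuous_snd).measurableSet
  have hint : Integrable (Function.uncurry fun x y => T.indicator g (x, y))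
      ((volume.restrict (Ioc a b)).prod (volume.restrict (Ioc a b))) := by
    rw [Measure.prod_restrict, ← Measure.volume_eq_prod]
    exact ((hg.continuousOn.integrableOn_compact (isCompact_Icc.prod isCompact_Icc)).mono_set
      (prod_mono Ioc_subset_Icc_self Ioc_subset_Icc_self)).indicator hT
  have inner_right (x : ℝ) (hx : x ∈ Ioc a b) :
      ∫ y in Ioc a b, T.indicator g (x, y) = ∫ y in x..b, g (x, y) := by
    have hslice : Ioc a b ∩ Prod.mk x ⁻¹' T = Icc x b := by
      ext y
      simp only [T, mem_inter_iff, mem_Ioc, mem_preimage, mem_ofPred_eq, mem_Icc]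
      constructor
      · rintro ⟨⟨-, hyb⟩, hxy⟩; exact ⟨hxy, hyb⟩
      · rintro ⟨hxy, hyb⟩; exact ⟨⟨hx.1.trans_le hxy, hyb⟩, hxy⟩
    simp_rw [← indicator_comp_right (Prod.mk x)]
    rw [setIntegral_indicator (measurable_prodMk_left hT), hslice, integral_Icc_eq_integral_Ioc,
      integral_of_le hx.2]
    rfl
  have inner_left (y : ℝ) (hy : y ∈ Ioc a b) :
      ∫ x in Ioc a b, T.indicator g (x, y) = ∫ x in a..y, g (x, y) := by
    have hslice : Ioc a b ∩ (fun x => (x, y)) ⁻¹' T = Ioc a y := by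
      ext x
      simp only [T, mem_inter_iff, mem_Ioc, mem_preimage, mem_ofPred_eq]
      constructor
      · rintro ⟨⟨hax, -⟩, hxy⟩; exact ⟨hax, hxy⟩
      · rintro ⟨hax, hxy⟩; exact ⟨⟨hax, hxy.trans hy.2⟩, hxy⟩
    simp_rw [← indicator_comp_right (fun x => (x, y))]
    rw [setIntegral_indicator (measurable_prodMk_right hT), hslice, integral_of_le hy.1.le]
    rfl
  calc ∫ x in a..b, ∫ y in x..b, g (x, y)
      = ∫ x in Ioc a b, ∫ y in Ioc a b, T.indicator g (x, y) := by
        rw [integral_of_le hab]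
        exact setIntegral_congr_fun measurableSet_Ioc fun x hx => (inner_right x hx).symm
    _ = ∫ y in Ioc a b, ∫ x in Ioc a b, T.indicator g (x, y) := integral_integral_swap hint
    _ = ∫ y in a..b, ∫ x in a..y, g (x, y) := by
        rw [integral_of_le hab]
        exact setIntegral_congr_fun measurableSet_Ioc inner_left

theorem integral_id_mul_eq_midpoint_mul_integral {a b : ℝ} {φ : ℝ → ℝ} (hφ : Continuous φ)
    (hsym : ∀ y ∈ uIcc a b, φ (a + b - y) = φ y) :
    ∫ y in a..b, y * φ y = (a + b) / 2 * ∫ y in a..b, φ y := by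
  have hflip : ∫ y in a..b, y * φ y = ∫ y in a..b, (a + b - y) * φ y :=
    calc ∫ y in a..b, y * φ y = ∫ y in a..b, (a + b - y) * φ (a + b - y) := by
          rw [integral_comp_sub_left (fun y => y * φ y)]; simp
      _ = ∫ y in a..b, (a + b - y) * φ y :=
          intervalIntegral.integral_congr fun y hy => by simp only [hsym y hy]
  have hsum : (∫ y in a..b, y * φ y) + ∫ y in a..b, (a + b - y) * φ y
      = (a + b) * ∫ y in a..b, φ y := by
    rw [← intervalIntegral.integral_add
      ((by fun_prop : Continuous fun y => y * φ y).intervalIntegrable _ _)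
      ((by fun_prop : Continuous fun y => (a + b - y) * φ y).intervalIntegrable _ _),
      ← intervalIntegral.integral_const_mul]
    congr 1; ext y; ring
  linarith

theorem mul_QfR_eq {K : ℝ → ℝ → ℝ} (hK : Continuous fun p : ℝ × ℝ => K p.1 p.2)
    (hsym : ∀ x y, K x y = K y x) (R : ℝ) (U : ℝ → ℝ) (x : ℝ) :
    x * QfR R K U x
      = (∫ y in (0:ℝ)..x, y * K y (x - y) * U x) - ∫ y in x..R, x * K x (y - x) * U y := by
  have hcentroid : ∫ y in (0:ℝ)..x, y * K y (x - y) = x / 2 * ∫ y in (0:ℝ)..x, K y (x - y) := by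
    simpa using integral_id_mul_eq_midpoint_mul_integral (a := 0) (b := x)
      (φ := fun y => K y (x - y))
      (hK.comp (continuous_id.prodMk (continuous_const.sub continuous_id)))
      fun y _ => by simp [hsym y]
  have hgain : x * ∫ y in x..R, K x (y - x) * U y = ∫ y in x..R, x * K x (y - x) * U y := by
    simp_rw [← intervalIntegral.integral_const_mul, mul_assoc]
  rw [QfR, mul_sub, hgain, intervalIntegral.integral_mul_const, hcentroid]
  ring

theorem integral_mul_QfR_eq_zero_of_continuous {R : ℝ} (hR : 0 ≤ R) {K : ℝ → ℝ → ℝ}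
    {U : ℝ → ℝ} (hK : Continuous fun p : ℝ × ℝ => K p.1 p.2) (hsym : ∀ x y, K x y = K y x)
    (hU : Continuous U) :
    ∫ x in (0:ℝ)..R, x * QfR R K U x = 0 := by
  set G : ℝ × ℝ → ℝ := fun p => p.1 * K p.1 (p.2 - p.1) * U p.2
  have hG : Continuous G := by fun_prop
  have hloss : Continuous fun x => ∫ y in (0:ℝ)..x, G (y, x) :=
    continuous_parametric_intervalIntegral_of_continuous (f := fun x y => G (y, x))
      (by fun_prop) continuous_id
  have hgain : Continuous fun x => ∫ y in x..R, G (x, y) := by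
    have hflip : (fun x => ∫ y in x..R, G (x, y)) = fun x => -∫ y in R..x, G (x, y) :=
      funext fun x => integral_symm R x
    rw [hflip]
    exact (continuous_parametric_intervalIntegral_of_continuous (f := fun x y => G (x, y))
      (by fun_prop) continuous_id).neg
  calc ∫ x in (0:ℝ)..R, x * QfR R K U x
      = ∫ x in (0:ℝ)..R, ((∫ y in (0:ℝ)..x, G (y, x)) - ∫ y in x..R, G (x, y)) :=
        intervalIntegral.integral_congr fun x _ => mul_QfR_eq hK hsym R U x
    _ = (∫ x in (0:ℝ)..R, ∫ y in (0:ℝ)..x, G (y, x)) - ∫ x in (0:ℝ)..R, ∫ y in x..R, G (x, y) :=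
        intervalIntegral.integral_sub (hloss.intervalIntegrable _ _) (hgain.intervalIntegrable _ _)
    _ = 0 := by rw [intervalIntegral_integral_swap_triangle hR hG, sub_self]

theorem QfR_congr {R : ℝ} {kf K : ℝ → ℝ → ℝ} {u U : ℝ → ℝ}
    (hK : ∀ x ∈ Icc 0 R, ∀ y ∈ Icc 0 R, kf x y = K x y) (hU : EqOn u U (Icc 0 R))
    {x : ℝ} (hx : x ∈ Icc 0 R) : QfR R kf u x = QfR R K U x := by
  have hloss : ∫ y in (0:ℝ)..x, kf y (x - y) = ∫ y in (0:ℝ)..x, K y (x - y) := by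
    refine intervalIntegral.integral_congr fun y hy => ?_
    rw [uIcc_of_le hx.1] at hy
    exact hK y ⟨hy.1, hy.2.trans hx.2⟩ _ ⟨by linarith [hy.2], by linarith [hy.1, hx.2]⟩
  have hgain : ∫ y in x..R, kf x (y - x) * u y = ∫ y in x..R, K x (y - x) * U y := by
    refine intervalIntegral.integral_congr fun y hy => ?_
    rw [uIcc_of_le hx.2] at hy
    rw [hK x hx _ ⟨by linarith [hy.1], by linarith [hy.2, hx.1]⟩, hU ⟨hx.1.trans hy.1, hy.2⟩]
  rw [QfR, QfR, hloss, hgain, hU hx]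

/-- the truncated fragmentation operator exactly conserves the total mass
on `[0,R]`. -/
theorem truncated_fragmentation_mass_conservation
    (R : ℝ) (hR : 0 < R) (kf : ℝ → ℝ → ℝ) (u : ℝ → ℝ)
    (hkf_cont : ContinuousOn (fun p : ℝ × ℝ => kf p.1 p.2) (Set.Icc 0 R ×ˢ Set.Icc 0 R))
    (hkf_symm : ∀ x ∈ Set.Icc (0:ℝ) R, ∀ y ∈ Set.Icc (0:ℝ) R, kf x y = kf y x)
    (hu_cont : ContinuousOn u (Set.Icc 0 R)) :
    ∫ x in (0:ℝ)..R, x * QfR R kf u x = 0 := by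
  set π : ℝ → ℝ := fun x => projIcc 0 R hR.le x
  have hπ : Continuous π := continuous_subtype_val.comp continuous_projIcc
  have hπ_mem (x : ℝ) : π x ∈ Icc 0 R := (projIcc 0 R hR.le x).2
  have hπ_eq {x : ℝ} (hx : x ∈ Icc 0 R) : π x = x := congrArg Subtype.val (projIcc_of_mem _ hx)
  have hK : Continuous fun p : ℝ × ℝ => kf (π p.1) (π p.2) :=
    hkf_cont.comp_continuous (by fun_prop : Continuous fun p : ℝ × ℝ => (π p.1, π p.2))
      fun p => ⟨hπ_mem p.1, hπ_mem p.2⟩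
  have hU : Continuous fun x => u (π x) := hu_cont.comp_continuous hπ hπ_mem
  have hsym (x y : ℝ) : kf (π x) (π y) = kf (π y) (π x) := hkf_symm _ (hπ_mem x) _ (hπ_mem y)
  refine (intervalIntegral.integral_congr fun x hx => ?_).trans
    (integral_mul_QfR_eq_zero_of_continuous hR.le hK hsym hU)
  rw [uIcc_of_le hR.le] at hx
  rw [QfR_congr (K := fun a b => kf (π a) (π b)) (U := fun a => u (π a))
    (fun x hx y hy => congrArg₂ kf (hπ_eq hx).symm (hπ_eq hy).symm)
    (fun x hx => congrArg u (hπ_eq hx).symm) hx]
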